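/- arXiv:2104.02994 — 3 statements merged into one kernel-verified Lean document; each statement's English description precedes it below -/
import Mathlib

section
/- Let p be a prime, let G be a finite group, and let N be a normal subgroup of G of order coprime to p. Then the number of almost p-regular conjugacy classes of G is at least the number of almost p-regular conjugacy classes of G/N plus the number of orbits of the conjugation action of G on the set of almost p-regular conjugacy classes of N, minus 1. -/
/-- The set of almost `p`-regular conjugacy classes of a group `G`: those whose elements
have order not divisible by `p ^ 2`. -/
def almostPRegularClasses (p : ℕ) (G : Type) [Group G] : Set (ConjClasses G) :=
  {C | ∃ g : G, C = ConjClasses.mk g ∧ ¬ p ^ 2 ∣ orderOf g}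

/-- The orbit of a conjugacy class of a normal subgroup `N ⊴ G` under the conjugation
action of `G`. -/
def conjOrbit {G : Type} [Group G] (N : Subgroup G) [N.Normal]
    (C : ConjClasses ↥N) : Set (ConjClasses ↥N) :=
  {D | ∃ g : G, D = ConjClasses.map (MulAut.conjNormal g).toMonoidHom C}

/-- Composition of the conjugation maps on conjugacy classes. -/
lemma map_conjNormal_map {G : Type} [Group G] (N : Subgroup G) [N.Normal] (g x : G)
    (C : ConjClasses ↥N) :
    ConjClasses.map (MulAut.conjNormal g).toMonoidHom
      (ConjClasses.map (MulAut.conjNormal x).toMonoidHom C) =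
      ConjClasses.map (MulAut.conjNormal (g * x)).toMonoidHom C := by
  obtain ⟨a, rfl⟩ := C.exists_rep
  show ConjClasses.mk (MulAut.conjNormal g (MulAut.conjNormal x a)) =
    ConjClasses.mk (MulAut.conjNormal (g * x) a)
  rw [map_mul]
  rfl

lemma conjOrbit_eq_of_mem {G : Type} [Group G] (N : Subgroup G) [N.Normal]
    {C D : ConjClasses ↥N} (h : D ∈ conjOrbit N C) : conjOrbit N D = conjOrbit N C := by
  obtain ⟨x, rfl⟩ := h
  ext E
  constructor
  · rintro ⟨g, rfl⟩
    exact ⟨g * x, map_conjNormal_map N g x C⟩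
  · rintro ⟨g, rfl⟩
    refine ⟨g * x⁻¹, ?_⟩
    rw [map_conjNormal_map, inv_mul_cancel_right]

/-- Key lemma: if `|N|` is coprime to `p` and the image of `g` in `G⧸N` has order
not divisible by `p²`, then so does `g`. -/
lemma key_lift {G : Type} [Group G] [Finite G] {p : ℕ} (hp : p.Prime)
    {N : Subgroup G} [N.Normal] (hN : Nat.Coprime (Nat.card ↥N) p) (g : G)
    (h : ¬ p ^ 2 ∣ orderOf ((g : G ⧸ N))) : ¬ p ^ 2 ∣ orderOf g := by
  set n := orderOf ((g : G ⧸ N)) with hn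
  have hdvd : n ∣ orderOf g := orderOf_map_dvd (QuotientGroup.mk' N) g
  have hg0 : orderOf g ≠ 0 := by
    have : 0 < orderOf g := (isOfFinOrder_of_finite g).orderOf_pos
    omega
  have hn0 : n ≠ 0 := fun h0 => hg0 (Nat.eq_zero_of_zero_dvd (h0 ▸ hdvd))
  have hmem : g ^ n ∈ N := by
    rw [← QuotientGroup.eq_one_iff]
    have h2 : ((g ^ n : G) : G ⧸ N) = ((g : G ⧸ N)) ^ n := rfl
    rw [h2, hn]
    exact pow_orderOf_eq_one ((g : G) : G ⧸ N)
  have hm : orderOf (g ^ n) = orderOf g / n := orderOf_pow_of_dvd hn0 hdvd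
  have hprod : orderOf g = n * orderOf (g ^ n) := by
    rw [hm, Nat.mul_div_cancel' hdvd]
  have hmN : orderOf (g ^ n) ∣ Nat.card ↥N := N.orderOf_dvd_natCard hmem
  have hpm : ¬ p ∣ orderOf (g ^ n) := fun hpd =>
    hp.one_lt.ne' (Nat.eq_one_of_dvd_coprimes hN.symm (dvd_refl p) (hpd.trans hmN))
  intro hdv
  rw [hprod] at hdv
  have hcop : (p ^ 2).Coprime (orderOf (g ^ n)) :=
    Nat.Coprime.pow_left _ ((Nat.Prime.coprime_iff_not_dvd hp).2 hpm)
  exact h (hcop.dvd_of_dvd_mul_right hdv)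

theorem almost_p_regular_quotient (G : Type) [Group G] [Finite G] (p : ℕ) (hp : p.Prime)
    (N : Subgroup G) [N.Normal] (hN : Nat.Coprime (Nat.card ↥N) p) :
    Set.ncard (almostPRegularClasses p (G ⧸ N)) +
      Set.ncard {O : Set (ConjClasses ↥N) |
        ∃ C ∈ almostPRegularClasses p ↥N, O = conjOrbit N C} ≤
    Set.ncard (almostPRegularClasses p G) + 1 := by
  classical
  set A := almostPRegularClasses p (G ⧸ N)
  set B := {O : Set (ConjClasses ↥N) | ∃ C ∈ almostPRegularClasses p ↥N, O = conjOrbit N C}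
  set T := almostPRegularClasses p G
  -- the map Φ
  set Φ : ConjClasses G → ConjClasses (G ⧸ N) ⊕ Set (ConjClasses ↥N) := fun D =>
    if h : D.exists_rep.choose ∈ N then
      Sum.inr (conjOrbit N (ConjClasses.mk (⟨D.exists_rep.choose, h⟩ : ↥N)))
    else Sum.inl (ConjClasses.map (QuotientGroup.mk' N) D) with hΦ
  have hp_ndvd : ∀ x : ↥N, ¬ p ^ 2 ∣ orderOf (x : G) := by
    intro x hdvd
    have h1 : orderOf (x : G) = orderOf x := orderOf_injective N.subtype Subtype.coe_injective x
    have h2 : orderOf x ∣ Nat.card ↥N := orderOf_dvd_natCard x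
    have hpdvd : p ∣ Nat.card ↥N :=
      ((dvd_pow_self p two_ne_zero).trans hdvd).trans (h1 ▸ h2)
    exact hp.one_lt.ne' (Nat.eq_one_of_dvd_coprimes hN.symm (dvd_refl p) hpdvd)
  -- claim 1 : Sum.inl '' (A \ {1}) ⊆ Φ '' T
  have hclaim1 : Sum.inl '' (A \ {ConjClasses.mk (1 : G ⧸ N)}) ⊆ Φ '' T := by
    rintro _ ⟨C, ⟨⟨c, rfl, hc⟩, hC1⟩, rfl⟩
    set g : G := Quotient.out c with hg
    have hgc : ((g : G) : G ⧸ N) = c := c.out_eq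
    set D := ConjClasses.mk g with hD
    have hDT : D ∈ T := ⟨g, rfl, key_lift hp hN g (by rw [hgc]; exact hc)⟩
    refine ⟨D, hDT, ?_⟩
    have hrep : ConjClasses.mk D.exists_rep.choose = D := D.exists_rep.choose_spec
    have hconj : IsConj g D.exists_rep.choose :=
      ConjClasses.mk_eq_mk_iff_isConj.1 (hD ▸ hrep).symm
    have hne : D.exists_rep.choose ∉ N := by
      intro hmem
      have h1 : ((D.exists_rep.choose : G) : G ⧸ N) = 1 := (QuotientGroup.eq_one_iff _).2 hmem
      have h2 : IsConj ((g : G) : G ⧸ N) ((D.exists_rep.choose : G) : G ⧸ N) :=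
        (QuotientGroup.mk' N).map_isConj hconj
      rw [h1, hgc, isConj_one_left] at h2
      exact hC1 (by rw [Set.mem_singleton_iff, h2])
    rw [hΦ]
    simp only [hne, dif_neg, not_false_iff]
    have : ConjClasses.map (QuotientGroup.mk' N) D = ConjClasses.mk c := by
      show ConjClasses.mk ((g : G) : G ⧸ N) = ConjClasses.mk c
      rw [hgc]
    rw [this]
  -- claim 2 : Sum.inr '' B ⊆ Φ '' T
  have hclaim2 : Sum.inr '' B ⊆ Φ '' T := by
    rintro _ ⟨O, ⟨C, ⟨x, rfl, -⟩, rfl⟩, rfl⟩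
    set D := ConjClasses.mk ((x : G)) with hD
    have hDT : D ∈ T := ⟨x, rfl, hp_ndvd x⟩
    refine ⟨D, hDT, ?_⟩
    have hrep : ConjClasses.mk D.exists_rep.choose = D := D.exists_rep.choose_spec
    have hconj : IsConj (x : G) D.exists_rep.choose :=
      ConjClasses.mk_eq_mk_iff_isConj.1 (hD ▸ hrep).symm
    obtain ⟨c, hc⟩ := isConj_iff.1 hconj
    have hmem : D.exists_rep.choose ∈ N := hc ▸ Subgroup.Normal.conj_mem ‹N.Normal› _ x.2 c
    rw [hΦ]
    simp only [hmem, dif_pos]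
    congr 1
    refine conjOrbit_eq_of_mem N ⟨c, ?_⟩
    show ConjClasses.mk _ = ConjClasses.mk (MulAut.conjNormal c x)
    congr 1
    ext
    rw [MulAut.conjNormal_apply]
    exact hc.symm
  -- counting
  have hTfin : T.Finite := Set.toFinite T
  have hcount : (A \ {ConjClasses.mk (1 : G ⧸ N)}).ncard + B.ncard ≤ T.ncard := by
    have hunion : (Sum.inl '' (A \ {ConjClasses.mk (1 : G ⧸ N)}) ∪ Sum.inr '' B) ⊆ Φ '' T :=
      Set.union_subset hclaim1 hclaim2
    have h1 : (Sum.inl '' (A \ {ConjClasses.mk (1 : G ⧸ N)}) ∪ Sum.inr '' B).ncard ≤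
        (Φ '' T).ncard := Set.ncard_le_ncard hunion (hTfin.image Φ)
    have h2 : (Φ '' T).ncard ≤ T.ncard := Set.ncard_image_le hTfin
    have hdisj : Disjoint (Sum.inl '' (A \ {ConjClasses.mk (1 : G ⧸ N)}))
        (Sum.inr '' (B : Set (Set (ConjClasses ↥N)))) := by
      rw [Set.disjoint_iff]
      rintro _ ⟨⟨a, -, rfl⟩, ⟨b, -, h⟩⟩
      exact absurd h (by simp)
    have h3 : (Sum.inl '' (A \ {ConjClasses.mk (1 : G ⧸ N)}) ∪ Sum.inr '' B).ncard =
        (A \ {ConjClasses.mk (1 : G ⧸ N)}).ncard + B.ncard := by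
      rw [Set.ncard_union_eq hdisj (Set.toFinite _) (Set.toFinite _),
        Set.ncard_image_of_injective _ Sum.inl_injective,
        Set.ncard_image_of_injective _ Sum.inr_injective]
    omega
  have hA : A.ncard ≤ (A \ {ConjClasses.mk (1 : G ⧸ N)}).ncard + 1 := by
    have hsub : A ⊆ (A \ {ConjClasses.mk (1 : G ⧸ N)}) ∪ {ConjClasses.mk (1 : G ⧸ N)} := by
      intro a ha
      by_cases h : a = ConjClasses.mk (1 : G ⧸ N)
      · exact Or.inr (by simp [h])
      · exact Or.inl ⟨ha, h⟩
    calc A.ncard ≤ ((A \ {ConjClasses.mk (1 : G ⧸ N)}) ∪ {ConjClasses.mk (1 : G ⧸ N)}).ncard :=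
          Set.ncard_le_ncard hsub (Set.Finite.union (Set.toFinite _) (Set.toFinite _))
      _ ≤ (A \ {ConjClasses.mk (1 : G ⧸ N)}).ncard + ({ConjClasses.mk (1 : G ⧸ N)} :
            Set (ConjClasses (G ⧸ N))).ncard := Set.ncard_union_le _ _
      _ = (A \ {ConjClasses.mk (1 : G ⧸ N)}).ncard + 1 := by rw [Set.ncard_singleton]
  omega
end

section
/- Let A be a finite abelian group, t a positive integer, and H a subgroup of the wreath product A ≀ Sym(t) = A^t ⋊ Sym(t). Then k(H)/|H| ≥ 1/(t!)², where k(H) denotes the number of conjugacy classes of H. -/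
/-- The action of `Sym(t)` on `A ^ t` permuting the coordinates, as a homomorphism
into the automorphism group, defining the wreath product `A ≀ Sym(t)`. -/
def permuteCoords (A : Type) [CommGroup A] (t : ℕ) :
    Equiv.Perm (Fin t) →* MulAut (Fin t → A) where
  toFun σ := MulEquiv.arrowCongr σ (MulEquiv.refl A)
  map_one' := by ext; rfl
  map_mul' := by intros; ext; rfl

/-- If `K` is a normal subgroup of `H` whose elements commute with each other, then
`|K| ≤ k(H) * [H : K]`. -/
lemma card_le_conjClasses_mul_index {H : Type*} [Group H] [Finite H] (K : Subgroup H)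
    [K.Normal] (hcomm : ∀ x y : K, (x : H) * y = y * x) :
    Nat.card K ≤ Nat.card (ConjClasses H) * Nat.card (H ⧸ K) := by
  classical
  have hconjmem : ∀ (k : K) (h : H), h * (k : H) * h⁻¹ ∈ K := fun k h =>
    (inferInstance : K.Normal).conj_mem _ k.2 h
  -- conjugation of an element of K by a coset of K is well-defined
  have hwell : ∀ (k : K) (h₁ h₂ : H), @Setoid.r _ (QuotientGroup.leftRel K) h₁ h₂ →
      (⟨h₁ * k * h₁⁻¹, hconjmem k h₁⟩ : K) = ⟨h₂ * k * h₂⁻¹, hconjmem k h₂⟩ := by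
    intro k h₁ h₂ hr
    rw [QuotientGroup.leftRel_apply] at hr
    have hkn : (h₁⁻¹ * h₂) * (k : H) = (k : H) * (h₁⁻¹ * h₂) := hcomm ⟨_, hr⟩ k
    ext
    show h₁ * (k : H) * h₁⁻¹ = h₂ * (k : H) * h₂⁻¹
    have key : h₂ * (k : H) * h₂⁻¹ = h₁ * ((h₁⁻¹ * h₂) * (k : H) * (h₁⁻¹ * h₂)⁻¹) * h₁⁻¹ := by
      group
    rw [key, hkn]
    group
  let conjQ : K → H ⧸ K → K := fun k q =>
    Quotient.liftOn' q (fun h => (⟨h * k * h⁻¹, hconjmem k h⟩ : K)) (hwell k)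
  let s : ConjClasses H × (H ⧸ K) → K := fun p =>
    if hc : ∃ k : K, ConjClasses.mk (k : H) = p.1 then conjQ (Classical.choose hc) p.2 else 1
  have hs : Function.Surjective s := by
    intro x
    have hc : ∃ k : K, ConjClasses.mk (k : H) = ConjClasses.mk (x : H) := ⟨x, rfl⟩
    set k := Classical.choose hc with hk
    have hspec : ConjClasses.mk (k : H) = ConjClasses.mk (x : H) := Classical.choose_spec hc
    have hconj : IsConj (k : H) (x : H) := ConjClasses.mk_eq_mk_iff_isConj.mp hspec
    obtain ⟨h, hh⟩ := isConj_iff.mp hconj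
    refine ⟨(ConjClasses.mk (x : H), QuotientGroup.mk h), ?_⟩
    simp only [s, dif_pos hc]
    show (⟨h * k * h⁻¹, _⟩ : K) = x
    exact Subtype.ext hh
  calc Nat.card K ≤ Nat.card (ConjClasses H × (H ⧸ K)) :=
        Nat.card_le_card_of_surjective s hs
    _ = Nat.card (ConjClasses H) * Nat.card (H ⧸ K) := Nat.card_prod _ _

theorem subgroup_of_wreath_product_classes (A : Type) [CommGroup A] [Finite A]
    (t : ℕ) (ht : 0 < t)
    (H : Subgroup ((Fin t → A) ⋊[permuteCoords A t] Equiv.Perm (Fin t))) :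
    (1 : ℝ) / (t.factorial : ℝ) ^ 2 ≤
      (Nat.card (ConjClasses ↥H) : ℝ) / (Nat.card ↥H : ℝ) := by
  classical
  set G := (Fin t → A) ⋊[permuteCoords A t] Equiv.Perm (Fin t) with hG
  haveI : Finite G := Finite.of_injective (fun g : G => (g.left, g.right))
    (fun a b h => by
      obtain ⟨h1, h2⟩ := Prod.mk.injEq .. ▸ h
      exact SemidirectProduct.ext h1 h2)
  set φ : ↥H →* Equiv.Perm (Fin t) := SemidirectProduct.rightHom.comp H.subtype with hφ
  set K : Subgroup ↥H := φ.ker with hK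
  have hKright : ∀ x : ↥H, x ∈ K ↔ (x : G).right = 1 := fun x => Iff.rfl
  have hcomm : ∀ x y : K, (x : ↥H) * y = y * x := by
    intro x y
    have hx : ((x : ↥H) : G).right = 1 := (hKright _).mp x.2
    have hy : ((y : ↥H) : G).right = 1 := (hKright _).mp y.2
    refine Subtype.ext ?_
    push_cast
    ext i
    · simp [SemidirectProduct.mul_left, hx, hy, mul_comm]
    · simp [SemidirectProduct.mul_right, hx, hy]
  -- the index of K in H is at most t!
  have hq : Nat.card (↥H ⧸ K) ≤ t.factorial := by
    have h1 : Nat.card (↥H ⧸ K) = Nat.card φ.range :=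
      Nat.card_congr (QuotientGroup.quotientKerEquivRange φ).toEquiv
    have h2 : Nat.card φ.range ≤ Nat.card (Equiv.Perm (Fin t)) :=
      Nat.card_le_card_of_injective _ Subtype.coe_injective
    have h3 : Nat.card (Equiv.Perm (Fin t)) = t.factorial := by
      rw [Nat.card_eq_fintype_card, Fintype.card_perm, Fintype.card_fin]
    omega
  have hcard : Nat.card ↥H = Nat.card (↥H ⧸ K) * Nat.card K :=
    Subgroup.card_eq_card_quotient_mul_card_subgroup K
  have hmain : Nat.card ↥H ≤ Nat.card (ConjClasses ↥H) * t.factorial ^ 2 := by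
    have hle := card_le_conjClasses_mul_index K hcomm
    calc Nat.card ↥H = Nat.card (↥H ⧸ K) * Nat.card K := hcard
      _ ≤ Nat.card (↥H ⧸ K) * (Nat.card (ConjClasses ↥H) * Nat.card (↥H ⧸ K)) :=
          Nat.mul_le_mul_left _ hle
      _ ≤ t.factorial * (Nat.card (ConjClasses ↥H) * t.factorial) := by
          exact Nat.mul_le_mul hq (Nat.mul_le_mul_left _ hq)
      _ = Nat.card (ConjClasses ↥H) * t.factorial ^ 2 := by ring
  have hHpos : 0 < Nat.card ↥H := Nat.card_pos
  have hfpos : (0 : ℝ) < (t.factorial : ℝ) ^ 2 := by positivity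
  rw [div_le_div_iff₀ hfpos (by exact_mod_cast hHpos)]
  calc (1 : ℝ) * (Nat.card ↥H) = (Nat.card ↥H : ℝ) := one_mul _
    _ ≤ (Nat.card (ConjClasses ↥H) : ℝ) * (t.factorial : ℝ) ^ 2 := by
        exact_mod_cast hmain
end

section
/- Let p be a prime, let V be a 2-dimensional vector space over the field with p elements, and let H ≤ GL(V) be a subgroup of order coprime to p. If k(H ⋉ V) ≤ p, then V is an irreducible H-module and H is primitive on V; that is, V has no non-zero proper H-invariant subspace, and there do not exist two distinct 1-dimensional subspaces V₁, V₂ with V = V₁ ⊕ V₂ such that the action of H permutes the set {V₁, V₂}. -/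
/-- A linear automorphism of `V` as a multiplicative automorphism of
`Multiplicative V`, as a group homomorphism. This is used to form the semidirect
product `H ⋉ V` for a group `H ≤ GL(V)`. -/
def linearToMulAut (R V : Type) [Semiring R] [AddCommGroup V] [Module R V] :
    (V ≃ₗ[R] V) →* MulAut (Multiplicative V) where
  toFun e := AddEquiv.toMultiplicative e.toAddEquiv
  map_one' := by ext; rfl
  map_mul' := by intros; ext; rfl

/-- The semidirect product `H ⋉ V` for a subgroup `H` of `GL(V)`. -/
def affSDP (R V : Type) [Semiring R] [AddCommGroup V] [Module R V]
    (H : Subgroup (V ≃ₗ[R] V)) : Type :=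
  Multiplicative V ⋊[(linearToMulAut R V).comp H.subtype] ↥H

noncomputable instance (R V : Type) [Semiring R] [AddCommGroup V] [Module R V]
    (H : Subgroup (V ≃ₗ[R] V)) : Group (affSDP R V H) :=
  inferInstanceAs (Group (Multiplicative V ⋊[(linearToMulAut R V).comp H.subtype] ↥H))

open SemidirectProduct Multiplicative Module Submodule Finset

abbrev SDP (p : ℕ) (V : Type) [AddCommGroup V] [Module (ZMod p) V]
    (H : Subgroup (V ≃ₗ[ZMod p] V)) : Type :=
  Multiplicative V ⋊[(linearToMulAut (ZMod p) V).comp H.subtype] ↥H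

section Aux
variable {p : ℕ} {V : Type} [AddCommGroup V] [Module (ZMod p) V]
  {H : Subgroup (V ≃ₗ[ZMod p] V)}

lemma conj_inl (g : SDP p V H) (v : V) :
    g * inl (ofAdd v) * g⁻¹ = inl (ofAdd (g.right.val v)) := by
  have h0 : g * inl (ofAdd v) * g⁻¹
      = inl g.left * (inr g.right * inl (ofAdd v) * (inr g.right)⁻¹) * (inl g.left)⁻¹ := by
    conv_lhs => rw [← inl_left_mul_inr_right g]
    group
  rw [h0, ← map_inv, ← inl_aut, ← map_inv, ← map_mul, ← map_mul, mul_comm g.left, mul_assoc,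
    mul_inv_cancel, mul_one]
  rfl

lemma cV_eq_iff (v w : V) :
    ConjClasses.mk (inl (ofAdd v) : SDP p V H) = ConjClasses.mk (inl (ofAdd w))
      ↔ ∃ h : ↥H, h.val v = w := by
  rw [ConjClasses.mk_eq_mk_iff_isConj, isConj_iff]
  constructor
  · rintro ⟨c, hc⟩
    refine ⟨c.right, ?_⟩
    have h2 := conj_inl c v
    rw [hc] at h2
    have h3 := inl_injective h2
    exact (congrArg Multiplicative.toAdd h3).symm
  · rintro ⟨h, hw⟩
    refine ⟨inr h, ?_⟩
    have h2 := conj_inl (inr h : SDP p V H) v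
    rw [show ((inr h : SDP p V H).right) = h from rfl, hw] at h2
    exact h2

lemma dH_eq_iff (h k : ↥H) :
    ConjClasses.mk (inr h : SDP p V H) = ConjClasses.mk (inr k) ↔ IsConj h k := by
  rw [ConjClasses.mk_eq_mk_iff_isConj]
  constructor
  · intro hc
    have h2 := (rightHom : SDP p V H →* ↥H).map_isConj hc
    simpa using h2
  · intro hc
    obtain ⟨c, hc⟩ := isConj_iff.1 hc
    exact isConj_iff.2 ⟨inr c, by rw [← map_inv, ← map_mul, ← map_mul, hc]⟩

lemma cV_ne_dH (v : V) (h : ↥H) (hh : h ≠ 1) :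
    ConjClasses.mk (inl (ofAdd v) : SDP p V H) ≠ ConjClasses.mk (inr h) := by
  intro hc
  rw [ConjClasses.mk_eq_mk_iff_isConj] at hc
  have h2 := (rightHom : SDP p V H →* ↥H).map_isConj hc
  simp only [rightHom_inl, rightHom_inr] at h2
  exact hh (isConj_one_right.1 h2)

lemma dH_one_eq_cV_zero :
    ConjClasses.mk (inr (1 : ↥H) : SDP p V H) = ConjClasses.mk (inl (ofAdd (0:V))) := by
  rw [map_one, show (ofAdd (0:V)) = 1 from rfl, map_one]

lemma cV_zero_iff (v : V) :
    ConjClasses.mk (inl (ofAdd v) : SDP p V H) = ConjClasses.mk (inl (ofAdd (0:V)))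
      ↔ v = 0 := by
  rw [cV_eq_iff]
  constructor
  · rintro ⟨h, hv⟩
    have := h.val.map_zero
    exact h.val.injective (by rw [hv, this])
  · rintro rfl
    exact ⟨1, by simp⟩

lemma finiteSDP [Finite V] : Finite (SDP p V H) := by
  haveI : Finite (V ≃ₗ[ZMod p] V) :=
    Finite.of_injective _ (DFunLike.coe_injective (F := V ≃ₗ[ZMod p] V))
  exact Finite.of_injective (fun g : SDP p V H => (g.left, g.right))
    (fun a b hab => by
      apply SemidirectProduct.ext
      · exact congrArg Prod.fst hab
      · exact congrArg Prod.snd hab)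

/-- orbit-size bound on fibers of the class map -/
lemma count_cV [Fintype V] [DecidableEq (ConjClasses (SDP p V H))] (S : Finset V) :
    S.card ≤ Nat.card ↥H *
      (S.image (fun v => ConjClasses.mk (inl (ofAdd v) : SDP p V H))).card := by
  classical
  haveI : Finite (V ≃ₗ[ZMod p] V) :=
    Finite.of_injective _ (DFunLike.coe_injective (F := V ≃ₗ[ZMod p] V))
  haveI : Fintype ↥H := Fintype.ofFinite ↥H
  apply Finset.card_le_mul_card_image
  intro b hb
  obtain ⟨v, hvS, hvb⟩ := Finset.mem_image.1 hb
  have hsub : {a ∈ S | ConjClasses.mk (inl (ofAdd a) : SDP p V H) = b}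
      ⊆ Finset.univ.image (fun h : ↥H => (h.val).symm v) := by
    intro a ha
    obtain ⟨-, hab⟩ := Finset.mem_filter.1 ha
    rw [← hvb, cV_eq_iff] at hab
    obtain ⟨h, hh⟩ := hab
    apply Finset.mem_image.2
    exact ⟨h, Finset.mem_univ _, by rw [← hh]; exact (h.val.symm_apply_apply a)⟩
  calc {a ∈ S | ConjClasses.mk (inl (ofAdd a) : SDP p V H) = b}.card
      ≤ (Finset.univ.image (fun h : ↥H => (h.val).symm v)).card := Finset.card_le_card hsub
    _ ≤ Fintype.card ↥H := by
        apply le_trans (Finset.card_image_le) (by simp)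
    _ = Nat.card ↥H := (Nat.card_eq_fintype_card).symm

end Aux

section Scal
variable {p : ℕ} [Fact p.Prime] {V : Type} [AddCommGroup V] [Module (ZMod p) V]

-- transport
lemma lem_transport {W : Submodule (ZMod p) V} {f : V ≃ₗ[ZMod p] V} {x y : V} {c s : ZMod p}
    (hinv : ∀ v ∈ W, f v ∈ W) (hc : f x - c • x ∈ W) (hs : y - s • x ∈ W) :
    f y - (c * s) • x ∈ W := by
  have h1 : f y - (c * s) • x = f (y - s • x) + s • (f x - c • x) := by
    rw [map_sub, map_smul, smul_sub]
    module
  rw [h1]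
  exact W.add_mem (hinv _ hs) (W.smul_mem _ hc)

lemma lem_prod_one {W : Submodule (ZMod p) V} {h : V ≃ₗ[ZMod p] V} {x : V} {c d : ZMod p}
    (hx : x ∉ W) (hinv : ∀ v ∈ W, h v ∈ W)
    (hc : h x - c • x ∈ W) (hd : h⁻¹ x - d • x ∈ W) : c * d = 1 := by
  have h1 : h (h⁻¹ x) - (c * d) • x ∈ W := lem_transport hinv hc hd
  have h2 : h (h⁻¹ x) = x := by
    have : (h * h⁻¹) x = x := by rw [mul_inv_cancel]; rfl
    exact this
  rw [h2] at h1
  by_contra hne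
  apply hx
  have h3 : (1 - c * d) • x ∈ W := by
    have : (1 - c*d) • x = x - (c*d) • x := by module
    rwa [this]
  have h4 : (1 - c*d) ≠ 0 := sub_ne_zero.2 (Ne.symm hne)
  have := W.smul_mem (1 - c*d)⁻¹ h3
  rwa [smul_smul, inv_mul_cancel₀ h4, one_smul] at this
end Scal

section Comm
variable {p : ℕ} [Fact p.Prime] {V : Type} [AddCommGroup V] [Module (ZMod p) V]
  {H : Subgroup (V ≃ₗ[ZMod p] V)}


lemma comm_mod (W : Submodule (ZMod p) V) (x : V) (hx : x ∉ W)
    (hinv : ∀ g : ↥H, ∀ v ∈ W, g.val v ∈ W)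
    (hscal : ∀ g : ↥H, ∃ c : ZMod p, g.val x - c • x ∈ W)
    (h k : ↥H) : (h * k * h⁻¹ * k⁻¹).val x - x ∈ W := by
  obtain ⟨c1, hc1⟩ := hscal k⁻¹
  obtain ⟨c2, hc2⟩ := hscal h⁻¹
  obtain ⟨c3, hc3⟩ := hscal k
  obtain ⟨c4, hc4⟩ := hscal h
  have e1 : (h⁻¹).val ((k⁻¹).val x) - (c2 * c1) • x ∈ W :=
    lem_transport (hinv h⁻¹) hc2 (by simpa using hc1)
  have e2 : k.val ((h⁻¹).val ((k⁻¹).val x)) - (c3 * (c2 * c1)) • x ∈ W :=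
    lem_transport (hinv k) hc3 e1
  have e3 : h.val (k.val ((h⁻¹).val ((k⁻¹).val x))) - (c4 * (c3 * (c2 * c1))) • x ∈ W :=
    lem_transport (hinv h) hc4 e2
  have p1 : c4 * c2 = 1 := lem_prod_one hx (hinv h) hc4 hc2
  have p2 : c3 * c1 = 1 := lem_prod_one hx (hinv k) hc3 hc1
  have hval : (h * k * h⁻¹ * k⁻¹).val x = h.val (k.val ((h⁻¹).val ((k⁻¹).val x))) := rfl
  have hcoef : c4 * (c3 * (c2 * c1)) = 1 := by
    have : c4 * (c3 * (c2 * c1)) = (c4 * c2) * (c3 * c1) := by ring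
    rw [this, p1, p2, one_mul]
  rw [hval]
  have := e3
  rwa [hcoef, one_smul] at this

lemma pow_p_eq_one (hp : p.Prime) (W : Submodule (ZMod p) V) (w₀ v₀ : V)
    (hW : W = Submodule.span (ZMod p) {w₀})
    (hsup : Submodule.span (ZMod p) ({w₀, v₀} : Set V) = ⊤)
    (g : ↥H) (hgw : g.val w₀ = w₀) (hgv : g.val v₀ - v₀ ∈ W) :
    g ^ p = 1 := by
  have hfixW : ∀ w ∈ W, g.val w = w := by
    intro w hw
    rw [hW, Submodule.mem_span_singleton] at hw
    obtain ⟨t, rfl⟩ := hw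
    rw [map_smul, hgw]
  set u := g.val v₀ - v₀ with hu
  have hgv0 : g.val v₀ = v₀ + u := by rw [hu]; abel
  have hgu : g.val u = u := hfixW u hgv
  have hupow : ∀ n : ℕ, ((g : V ≃ₗ[ZMod p] V) ^ n) v₀ = v₀ + n • u := by
    intro n
    induction n with
    | zero => simp
    | succ n ih =>
      rw [pow_succ']
      show (g : V ≃ₗ[ZMod p] V) (((g : V ≃ₗ[ZMod p] V) ^ n) v₀) = _
      rw [ih, map_add, map_nsmul, hgu]
      show g.val v₀ + n • u = _
      rw [hgv0, succ_nsmul]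
      abel
  have hwpow : ∀ n : ℕ, ((g : V ≃ₗ[ZMod p] V) ^ n) w₀ = w₀ := by
    intro n
    induction n with
    | zero => rfl
    | succ n ih =>
      rw [pow_succ']
      show (g : V ≃ₗ[ZMod p] V) (((g : V ≃ₗ[ZMod p] V) ^ n) w₀) = _
      rw [ih, hgw]
  have hpu : (p : ℕ) • u = 0 := by
    have h1 : (p : ℕ) • u = ((p : ZMod p)) • u := (Nat.cast_smul_eq_nsmul (ZMod p) p u).symm
    rw [h1, ZMod.natCast_self, zero_smul]
  have hcoe : ((g ^ p : ↥H) : V ≃ₗ[ZMod p] V) = ((g : V ≃ₗ[ZMod p] V)) ^ p := by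
    exact SubmonoidClass.coe_pow g p
  have : ((g ^ p : ↥H) : V ≃ₗ[ZMod p] V) = 1 := by
    rw [hcoe]
    apply LinearEquiv.toLinearMap_injective
    apply LinearMap.ext_on (hsup)
    intro x hx
    rcases hx with hx | hx
    · subst hx
      show ((g : V ≃ₗ[ZMod p] V) ^ p) x = x
      exact hwpow p
    · have hx' : x = v₀ := hx
      show ((g : V ≃ₗ[ZMod p] V) ^ p) x = x
      rw [hx', hupow p, hpu, add_zero]
  exact Subtype.ext this
end Comm

section Part1
variable {p : ℕ} [Fact p.Prime] {V : Type} [AddCommGroup V] [Module (ZMod p) V]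
  {H : Subgroup (V ≃ₗ[ZMod p] V)}

lemma part1_aux [Fintype V]
    (hdim : Module.finrank (ZMod p) V = 2)
    (hH : Nat.Coprime (Nat.card ↥H) p)
    (hk : Nat.card (ConjClasses (SDP p V H)) ≤ p)
    (W : Submodule (ZMod p) V) (hWinv : ∀ h ∈ H, ∀ v ∈ W, h v ∈ W)
    (hbot : W ≠ ⊥) (htop : W ≠ ⊤) : False := by
  classical
  have hp : p.Prime := Fact.out
  haveI : FiniteDimensional (ZMod p) V := .of_finrank_eq_succ hdim
  haveI : NeZero p := ⟨hp.ne_zero⟩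
  obtain ⟨w₀, hw₀W, hw₀⟩ := W.ne_bot_iff.1 hbot
  -- invariance for subtype elements
  have hinv : ∀ g : ↥H, ∀ v ∈ W, g.val v ∈ W := fun g => hWinv g.val g.prop
  -- finrank W ≤ 1
  have hWle : Module.finrank (ZMod p) ↥W ≤ 1 := by
    by_contra hcon
    push_neg at hcon
    apply htop
    apply Submodule.eq_top_of_finrank_eq
    have := Submodule.finrank_le W
    omega
  -- W is spanned by w₀
  have hWspan : W = span (ZMod p) {w₀} := by
    have hle : span (ZMod p) {w₀} ≤ W := by
      rw [span_le, Set.singleton_subset_iff]; exact hw₀W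
    have hfr : Module.finrank (ZMod p) ↥(span (ZMod p) {w₀}) = 1 := finrank_span_singleton hw₀
    exact (Submodule.eq_of_le_of_finrank_le hle (by omega)).symm
  have hWfr : Module.finrank (ZMod p) ↥W = 1 := by rw [hWspan]; exact finrank_span_singleton hw₀
  -- pick v₀ outside W
  have hexv : ∃ v₀ : V, v₀ ∉ W := by
    by_contra hcon
    push_neg at hcon
    exact htop (Submodule.eq_top_iff'.2 hcon)
  obtain ⟨v₀, hv₀⟩ := hexv
  have hv₀mem : v₀ ∈ W ⊔ span (ZMod p) {v₀} :=
    le_sup_right (α := Submodule (ZMod p) V) (subset_span rfl)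
  have hsup2 : W ⊔ span (ZMod p) {v₀} = ⊤ := by
    have hlt : W < W ⊔ span (ZMod p) {v₀} :=
      lt_of_le_of_ne le_sup_left (fun hEq => hv₀ (hEq ▸ hv₀mem))
    have h2 : Module.finrank (ZMod p) ↥W < Module.finrank (ZMod p) ↥(W ⊔ span (ZMod p) {v₀}) :=
      Submodule.finrank_lt_finrank_of_lt hlt
    have h3 := Submodule.finrank_le (W ⊔ span (ZMod p) {v₀})
    apply Submodule.eq_top_of_finrank_eq
    omega
  have hsupspan : span (ZMod p) ({w₀, v₀} : Set V) = ⊤ := by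
    rw [show ({w₀, v₀} : Set V) = insert w₀ {v₀} from rfl, span_insert, ← hWspan, hsup2]
  -- commutativity of H
  have habel : ∀ h k : ↥H, h * k = k * h := by
    intro h k
    have hscalW : ∀ g : ↥H, ∃ c : ZMod p, g.val w₀ - c • w₀ ∈ (⊥ : Submodule (ZMod p) V) := by
      intro g
      have := hinv g w₀ hw₀W
      rw [hWspan, mem_span_singleton] at this
      obtain ⟨c, hc⟩ := this
      exact ⟨c, by rw [← hc]; simp⟩
    have hinvbot : ∀ g : ↥H, ∀ v ∈ (⊥ : Submodule (ZMod p) V), g.val v ∈ (⊥ : Submodule (ZMod p) V) := by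
      intro g v hv
      rw [Submodule.mem_bot] at hv
      rw [hv, map_zero]
      exact Submodule.zero_mem _
    have hgw' : (h * k * h⁻¹ * k⁻¹).val w₀ - w₀ ∈ (⊥ : Submodule (ZMod p) V) :=
      comm_mod ⊥ w₀ (by simpa using hw₀) hinvbot hscalW h k
    have hgw : (h * k * h⁻¹ * k⁻¹).val w₀ = w₀ := by
      rw [Submodule.mem_bot, sub_eq_zero] at hgw'
      exact hgw'
    have hscalV : ∀ g : ↥H, ∃ c : ZMod p, g.val v₀ - c • v₀ ∈ W := by
      intro g
      have hmem : g.val v₀ ∈ W ⊔ span (ZMod p) {v₀} := by rw [hsup2]; trivial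
      obtain ⟨w, hw, z, hz, hwz⟩ := Submodule.mem_sup.1 hmem
      obtain ⟨c, hc⟩ := mem_span_singleton.1 hz
      exact ⟨c, by rw [← hwz, ← hc]; simpa using hw⟩
    have hgv : (h * k * h⁻¹ * k⁻¹).val v₀ - v₀ ∈ W :=
      comm_mod W v₀ hv₀ hinv hscalV h k
    have hpow : (h * k * h⁻¹ * k⁻¹) ^ p = 1 :=
      pow_p_eq_one hp W w₀ v₀ hWspan hsupspan _ hgw hgv
    have hdvd1 : orderOf (h * k * h⁻¹ * k⁻¹) ∣ p := orderOf_dvd_of_pow_eq_one hpow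
    have hdvd2 : orderOf (h * k * h⁻¹ * k⁻¹) ∣ Nat.card ↥H := orderOf_dvd_natCard _
    have hone : orderOf (h * k * h⁻¹ * k⁻¹) = 1 :=
      Nat.dvd_one.1 (hH ▸ Nat.dvd_gcd hdvd2 hdvd1)
    have hg1 : h * k * h⁻¹ * k⁻¹ = 1 := orderOf_eq_one_iff.1 hone
    calc h * k = (h * k * h⁻¹ * k⁻¹) * (k * h) := by group
      _ = k * h := by rw [hg1, one_mul]
  -- Counting
  haveI : Finite (V ≃ₗ[ZMod p] V) :=
    Finite.of_injective _ (DFunLike.coe_injective (F := V ≃ₗ[ZMod p] V))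
  haveI : Fintype ↥H := Fintype.ofFinite ↥H
  haveI : Finite (SDP p V H) := finiteSDP
  haveI : Fintype (ConjClasses (SDP p V H)) := Fintype.ofFinite _
  set cV : V → ConjClasses (SDP p V H) := fun v => ConjClasses.mk (inl (ofAdd v)) with hcV
  set dd : ↥H → ConjClasses (SDP p V H) := fun h => ConjClasses.mk (inr h) with hdd
  set A : Finset (ConjClasses (SDP p V H)) :=
    (Finset.univ.filter (fun v => v ∉ W)).image cV with hA
  set D : Finset (ConjClasses (SDP p V H)) := Finset.univ.image dd with hD
  -- D has card = |H|
  have hddinj : Function.Injective dd := by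
    intro x y hxy
    simp only [hdd] at hxy
    have := (dH_eq_iff x y).1 hxy
    obtain ⟨c, hc⟩ := isConj_iff.1 this
    rw [← hc, habel c x, mul_assoc, mul_inv_cancel, mul_one]
  have hDcard : D.card = Fintype.card ↥H := by
    rw [hD, Finset.card_image_of_injective _ hddinj, Finset.card_univ]
  -- A bound
  have hScard : (Finset.univ.filter (fun v => v ∉ W)).card = p ^ 2 - p := by
    have h1 : (Finset.univ.filter (fun v => v ∈ W)).card = p := by
      rw [← Fintype.card_subtype]
      have := card_eq_pow_finrank (K := ZMod p) (V := ↥W)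
      rw [ZMod.card, hWfr, pow_one] at this
      exact this
    have h2 : (Finset.univ.filter (fun v => v ∈ W)).card
        + (Finset.univ.filter (fun v => v ∉ W)).card = Fintype.card V := by
      rw [← Finset.card_univ]
      exact Finset.card_filter_add_card_filter_not _
    have h3 : Fintype.card V = p ^ 2 := by
      have := card_eq_pow_finrank (K := ZMod p) (V := V)
      rw [ZMod.card, hdim] at this
      exact this
    omega
  have hAbound : p ^ 2 - p ≤ Fintype.card ↥H * A.card := by
    have := count_cV (p := p) (H := H) (Finset.univ.filter (fun v => v ∉ W))
    rw [hScard, Nat.card_eq_fintype_card] at this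
    exact this
  -- disjointness
  have hcw₀A : cV w₀ ∉ A := by
    rw [hA]
    intro hmem
    obtain ⟨s, hs, hseq⟩ := Finset.mem_image.1 hmem
    obtain ⟨-, hsW⟩ := Finset.mem_filter.1 hs
    simp only [hcV] at hseq
    obtain ⟨h, hh⟩ := (cV_eq_iff s w₀).1 hseq
    apply hsW
    have : h⁻¹.val w₀ ∈ W := hinv h⁻¹ w₀ hw₀W
    rw [← hh] at this
    rwa [show (h⁻¹.val) (h.val s) = s from h.val.symm_apply_apply s] at this
  have hcw₀D : cV w₀ ∉ D := by
    rw [hD]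
    intro hmem
    obtain ⟨h, -, hseq⟩ := Finset.mem_image.1 hmem
    by_cases hone : h = 1
    · rw [hone] at hseq
      simp only [hdd, hcV] at hseq
      rw [dH_one_eq_cV_zero] at hseq
      exact hw₀ ((cV_zero_iff w₀).1 hseq.symm)
    · exact cV_ne_dH w₀ h hone hseq.symm
  have hADdisj : Disjoint A D := by
    rw [Finset.disjoint_left]
    intro x hxA hxD
    obtain ⟨s, hs, hseq⟩ := Finset.mem_image.1 hxA
    obtain ⟨-, hsW⟩ := Finset.mem_filter.1 hs
    obtain ⟨h, -, hheq⟩ := Finset.mem_image.1 hxD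
    rw [← hheq] at hseq
    by_cases hone : h = 1
    · rw [hone] at hseq
      simp only [hcV, hdd] at hseq
      rw [dH_one_eq_cV_zero] at hseq
      apply hsW
      rw [(cV_zero_iff s).1 hseq]
      exact W.zero_mem
    · exact cV_ne_dH s h hone hseq
  -- total
  set T : Finset (ConjClasses (SDP p V H)) := insert (cV w₀) (A ∪ D) with hT
  have hTcard : T.card = 1 + (A.card + D.card) := by
    rw [hT, Finset.card_insert_of_notMem (by
      rw [Finset.mem_union]; rintro (h | h); exact hcw₀A h; exact hcw₀D h),
      Finset.card_union_of_disjoint hADdisj]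
    omega
  have hTle : T.card ≤ p := by
    calc T.card ≤ Fintype.card (ConjClasses (SDP p V H)) := Finset.card_le_univ T
      _ = Nat.card (ConjClasses (SDP p V H)) := (Nat.card_eq_fintype_card).symm
      _ ≤ p := hk
  -- numbers
  set a := A.card
  set m := Fintype.card ↥H
  have hm1 : 1 ≤ m := Fintype.card_pos
  have hple : p ≤ p ^ 2 := by nlinarith [hp.two_le]
  have hfin : False := by
    have h1 : 1 + (a + m) ≤ p := by rw [hTcard, hDcard] at hTle; exact hTle
    have h2 : (p : ℤ) ^ 2 - p ≤ (m : ℤ) * a := by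
      have := hAbound
      zify [hple] at this
      linarith
    have h3 : (2 : ℤ) ≤ p := by exact_mod_cast hp.two_le
    have h4 : (1 : ℤ) + (a + m) ≤ p := by exact_mod_cast h1
    nlinarith [sq_nonneg ((a : ℤ) - m), sq_nonneg ((a : ℤ) + m)]
  exact hfin

end Part1

section Part2

variable {p : ℕ} [Fact p.Prime] {V : Type} [AddCommGroup V] [Module (ZMod p) V]
  {H : Subgroup (V ≃ₗ[ZMod p] V)}

set_option maxHeartbeats 2000000 in
lemma part2_aux [Fintype V]
    (hdim : Module.finrank (ZMod p) V = 2)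
    (hk : Nat.card (ConjClasses (SDP p V H)) ≤ p)
    (V1 V2 : Submodule (ZMod p) V) (hne : V1 ≠ V2)
    (hr1 : Module.finrank (ZMod p) ↥V1 = 1) (hr2 : Module.finrank (ZMod p) ↥V2 = 1)
    (hcompl : IsCompl V1 V2)
    (hdich : ∀ h : ↥H,
      (V1.map ((h : V ≃ₗ[ZMod p] V) : V →ₗ[ZMod p] V) = V1 ∧
       V2.map ((h : V ≃ₗ[ZMod p] V) : V →ₗ[ZMod p] V) = V2) ∨
      (V1.map ((h : V ≃ₗ[ZMod p] V) : V →ₗ[ZMod p] V) = V2 ∧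
       V2.map ((h : V ≃ₗ[ZMod p] V) : V →ₗ[ZMod p] V) = V1))
    (σ : ↥H)
    (hσ : V1.map ((σ : V ≃ₗ[ZMod p] V) : V →ₗ[ZMod p] V) = V2 ∧
          V2.map ((σ : V ≃ₗ[ZMod p] V) : V →ₗ[ZMod p] V) = V1) : False := by
  classical
  have hp : p.Prime := Fact.out
  haveI : FiniteDimensional (ZMod p) V := .of_finrank_eq_succ hdim
  haveI : NeZero p := ⟨hp.ne_zero⟩
  -- abbreviations
  set Fix : ↥H → Prop := fun h =>
    V1.map ((h : V ≃ₗ[ZMod p] V) : V →ₗ[ZMod p] V) = V1 ∧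
    V2.map ((h : V ≃ₗ[ZMod p] V) : V →ₗ[ZMod p] V) = V2 with hFixdef
  set Swap : ↥H → Prop := fun h =>
    V1.map ((h : V ≃ₗ[ZMod p] V) : V →ₗ[ZMod p] V) = V2 ∧
    V2.map ((h : V ≃ₗ[ZMod p] V) : V →ₗ[ZMod p] V) = V1 with hSwapdef
  -- map composition helpers
  have hmap_mul : ∀ (e f : V ≃ₗ[ZMod p] V) (S : Submodule (ZMod p) V),
      S.map ((e * f : V ≃ₗ[ZMod p] V) : V →ₗ[ZMod p] V)
        = (S.map (f : V →ₗ[ZMod p] V)).map (e : V →ₗ[ZMod p] V) := by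
    intro e f S
    rw [LinearEquiv.coe_toLinearMap_mul, Module.End.mul_eq_comp, Submodule.map_comp]
  have hmap_one : ∀ S : Submodule (ZMod p) V,
      S.map ((1 : V ≃ₗ[ZMod p] V) : V →ₗ[ZMod p] V) = S := by
    intro S
    rw [LinearEquiv.coe_toLinearMap_one, Submodule.map_id]
  have hmap_inv : ∀ (e : V ≃ₗ[ZMod p] V) (S T : Submodule (ZMod p) V),
      S.map (e : V →ₗ[ZMod p] V) = T → T.map ((e⁻¹ : V ≃ₗ[ZMod p] V) : V →ₗ[ZMod p] V) = S := by
    intro e S T hST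
    rw [← hST, ← hmap_mul, inv_mul_cancel, hmap_one]
  -- coercion for products in the subgroup
  have hcoe_mul : ∀ (x y : ↥H), ((x * y : ↥H) : V ≃ₗ[ZMod p] V)
      = (x : V ≃ₗ[ZMod p] V) * (y : V ≃ₗ[ZMod p] V) := fun x y => rfl
  have hcoe_inv : ∀ (x : ↥H), ((x⁻¹ : ↥H) : V ≃ₗ[ZMod p] V)
      = ((x : V ≃ₗ[ZMod p] V))⁻¹ := fun x => rfl
  -- closure properties
  have hfix_inv : ∀ h : ↥H, Fix h → Fix h⁻¹ := by
    intro h hh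
    constructor
    · rw [hcoe_inv]; exact hmap_inv _ _ _ hh.1
    · rw [hcoe_inv]; exact hmap_inv _ _ _ hh.2
  have hswap_inv : ∀ h : ↥H, Swap h → Swap h⁻¹ := by
    intro h hh
    constructor
    · rw [hcoe_inv]; exact hmap_inv _ _ _ hh.2
    · rw [hcoe_inv]; exact hmap_inv _ _ _ hh.1
  have hswapswap : ∀ h k : ↥H, Swap h → Swap k → Fix (h * k) := by
    intro h k hh hk2
    constructor
    · rw [hcoe_mul, hmap_mul, hk2.1, hh.2]
    · rw [hcoe_mul, hmap_mul, hk2.2, hh.1]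
  have hswapfix : ∀ h k : ↥H, Swap h → Fix k → Swap (h * k) := by
    intro h k hh hk2
    constructor
    · rw [hcoe_mul, hmap_mul, hk2.1, hh.1]
    · rw [hcoe_mul, hmap_mul, hk2.2, hh.2]
  have hfixswap : ∀ h k : ↥H, Fix h → Swap k → Swap (h * k) := by
    intro h k hh hk2
    constructor
    · rw [hcoe_mul, hmap_mul, hk2.1, hh.2]
    · rw [hcoe_mul, hmap_mul, hk2.2, hh.1]
  have hfixfix : ∀ h k : ↥H, Fix h → Fix k → Fix (h * k) := by
    intro h k hh hk2
    constructor
    · rw [hcoe_mul, hmap_mul, hk2.1, hh.1]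
    · rw [hcoe_mul, hmap_mul, hk2.2, hh.2]
  -- generators
  have hV1bot : V1 ≠ ⊥ := by
    intro hEq
    rw [hEq] at hr1
    rw [finrank_bot] at hr1
    exact absurd hr1 (by omega)
  have hV2bot : V2 ≠ ⊥ := by
    intro hEq
    rw [hEq] at hr2
    rw [finrank_bot] at hr2
    exact absurd hr2 (by omega)
  obtain ⟨v₁, hv₁mem, hv₁⟩ := V1.ne_bot_iff.1 hV1bot
  obtain ⟨v₂, hv₂mem, hv₂⟩ := V2.ne_bot_iff.1 hV2bot
  have hV1span : V1 = span (ZMod p) {v₁} := by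
    have hle : span (ZMod p) {v₁} ≤ V1 := by
      rw [span_le, Set.singleton_subset_iff]; exact hv₁mem
    have hfr : Module.finrank (ZMod p) ↥(span (ZMod p) {v₁}) = 1 := finrank_span_singleton hv₁
    exact (Submodule.eq_of_le_of_finrank_le hle (by omega)).symm
  have hV2span : V2 = span (ZMod p) {v₂} := by
    have hle : span (ZMod p) {v₂} ≤ V2 := by
      rw [span_le, Set.singleton_subset_iff]; exact hv₂mem
    have hfr : Module.finrank (ZMod p) ↥(span (ZMod p) {v₂}) = 1 := finrank_span_singleton hv₂
    exact (Submodule.eq_of_le_of_finrank_le hle (by omega)).symm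
  have hspan12 : span (ZMod p) ({v₁, v₂} : Set V) = ⊤ := by
    rw [show ({v₁, v₂} : Set V) = insert v₁ {v₂} from rfl, span_insert, ← hV1span, ← hV2span]
    exact hcompl.sup_eq_top
  -- application facts
  have happmem : ∀ (h : ↥H) (S : Submodule (ZMod p) V) (x : V), x ∈ S →
      (h : V ≃ₗ[ZMod p] V) x ∈ S.map ((h : V ≃ₗ[ZMod p] V) : V →ₗ[ZMod p] V) := by
    intro h S x hx
    exact Submodule.mem_map_of_mem hx
  -- commutativity on Fix elements
  have hcommFix : ∀ h k : ↥H, Fix h → Fix k → h * k = k * h := by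
    intro h k hh hk2
    have hc1 : ∀ g : ↥H, Fix g → ∃ c : ZMod p, (g : V ≃ₗ[ZMod p] V) v₁ = c • v₁ := by
      intro g hg
      have := happmem g V1 v₁ hv₁mem
      rw [hg.1, hV1span, mem_span_singleton] at this
      obtain ⟨c, hc⟩ := this
      exact ⟨c, hc.symm⟩
    have hc2 : ∀ g : ↥H, Fix g → ∃ c : ZMod p, (g : V ≃ₗ[ZMod p] V) v₂ = c • v₂ := by
      intro g hg
      have := happmem g V2 v₂ hv₂mem
      rw [hg.2, hV2span, mem_span_singleton] at this
      obtain ⟨c, hc⟩ := this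
      exact ⟨c, hc.symm⟩
    obtain ⟨c1, hc1h⟩ := hc1 h hh
    obtain ⟨c2, hc2h⟩ := hc2 h hh
    obtain ⟨d1, hc1k⟩ := hc1 k hk2
    obtain ⟨d2, hc2k⟩ := hc2 k hk2
    apply Subtype.ext
    apply LinearEquiv.toLinearMap_injective
    apply LinearMap.ext_on hspan12
    intro x hx
    rcases hx with hx | hx
    · subst hx
      show ((h * k : ↥H) : V ≃ₗ[ZMod p] V) x = ((k * h : ↥H) : V ≃ₗ[ZMod p] V) x
      rw [hcoe_mul, hcoe_mul]
      show (h : V ≃ₗ[ZMod p] V) ((k : V ≃ₗ[ZMod p] V) x) = (k : V ≃ₗ[ZMod p] V) ((h : V ≃ₗ[ZMod p] V) x)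
      rw [hc1k, map_smul, hc1h, map_smul, hc1k, smul_smul, smul_smul, mul_comm d1 c1]
    · rcases hx with rfl
      show ((h * k : ↥H) : V ≃ₗ[ZMod p] V) x = ((k * h : ↥H) : V ≃ₗ[ZMod p] V) x
      rw [hcoe_mul, hcoe_mul]
      show (h : V ≃ₗ[ZMod p] V) ((k : V ≃ₗ[ZMod p] V) x) = (k : V ≃ₗ[ZMod p] V) ((h : V ≃ₗ[ZMod p] V) x)
      rw [hc2k, map_smul, hc2h, map_smul, hc2k, smul_smul, smul_smul, mul_comm d2 c2]
  -- sigma is not 1, and Swap and Fix are exclusive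
  have hσswap : Swap σ := hσ
  have hexcl : ∀ h : ↥H, Fix h → Swap h → False := by
    intro h h1 h2
    exact hne (h1.1 ▸ h2.1 ▸ rfl)
  have hσne1 : σ ≠ 1 := by
    intro hEq
    apply hne
    have := hσswap.1
    rw [hEq] at this
    rw [show ((1 : ↥H) : V ≃ₗ[ZMod p] V) = 1 from rfl, hmap_one] at this
    exact this
  -- Finiteness
  haveI : Finite (V ≃ₗ[ZMod p] V) :=
    Finite.of_injective _ (DFunLike.coe_injective (F := V ≃ₗ[ZMod p] V))
  haveI : Fintype ↥H := Fintype.ofFinite ↥H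
  haveI : Finite (SDP p V H) := finiteSDP
  haveI : Fintype (ConjClasses (SDP p V H)) := Fintype.ofFinite _
  set cV : V → ConjClasses (SDP p V H) := fun v => ConjClasses.mk (inl (ofAdd v)) with hcV
  set dd : ↥H → ConjClasses (SDP p V H) := fun h => ConjClasses.mk (inr h) with hdd
  set F1 : Finset V := Finset.univ.filter (fun v => v ∈ V1) with hF1
  set F2 : Finset V := Finset.univ.filter (fun v => v ∈ V2) with hF2
  set S : Finset V := Finset.univ \ (F1 ∪ F2) with hS
  have hmemS : ∀ s ∈ S, s ∉ V1 ∧ s ∉ V2 := by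
    intro s hs
    rw [hS, Finset.mem_sdiff, Finset.mem_union, hF1, hF2] at hs
    obtain ⟨-, hs⟩ := hs
    push_neg at hs
    obtain ⟨hs1, hs2⟩ := hs
    exact ⟨fun h => hs1 (Finset.mem_filter.2 ⟨Finset.mem_univ _, h⟩),
           fun h => hs2 (Finset.mem_filter.2 ⟨Finset.mem_univ _, h⟩)⟩
  set A : Finset (ConjClasses (SDP p V H)) := S.image cV with hA
  set H0 : Finset ↥H := Finset.univ.filter (fun h => Fix h) with hH0
  set B : Finset (ConjClasses (SDP p V H)) := H0.image dd with hB
  -- all elements are Fix or Swap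
  have hFS : ∀ h : ↥H, Fix h ∨ Swap h := hdich
  -- card S
  have hcard1 : F1.card = p := by
    rw [hF1]
    rw [← Fintype.card_subtype]
    have := card_eq_pow_finrank (K := ZMod p) (V := ↥V1)
    rw [ZMod.card, hr1, pow_one] at this
    exact this
  have hcard2 : F2.card = p := by
    rw [hF2]
    rw [← Fintype.card_subtype]
    have := card_eq_pow_finrank (K := ZMod p) (V := ↥V2)
    rw [ZMod.card, hr2, pow_one] at this
    exact this
  have hcardV : Fintype.card V = p ^ 2 := by
    have := card_eq_pow_finrank (K := ZMod p) (V := V)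
    rw [ZMod.card, hdim] at this
    exact this
  have hinter : F1 ∩ F2 = {0} := by
    apply Finset.ext
    intro x
    rw [hF1, hF2]
    simp only [Finset.mem_inter, Finset.mem_filter, Finset.mem_univ, true_and,
      Finset.mem_singleton]
    constructor
    · rintro ⟨hx1, hx2⟩
      have : x ∈ V1 ⊓ V2 := ⟨hx1, hx2⟩
      rw [disjoint_iff.1 hcompl.disjoint] at this
      exact Submodule.mem_bot _ |>.1 this
    · rintro rfl
      exact ⟨V1.zero_mem, V2.zero_mem⟩
  have hcardU : (F1 ∪ F2).card + 1 = 2 * p := by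
    have := Finset.card_union_add_card_inter F1 F2
    rw [hinter, hcard1, hcard2, Finset.card_singleton] at this
    omega
  have hcardS : S.card + (F1 ∪ F2).card = p ^ 2 := by
    rw [hS, Finset.card_sdiff_add_card_eq_card (Finset.subset_univ _), Finset.card_univ, hcardV]
  -- A bound
  have hAbound : S.card ≤ Fintype.card ↥H * A.card := by
    have := count_cV (p := p) (H := H) S
    rw [Nat.card_eq_fintype_card] at this
    exact this
  -- B bound : fibers of dd on H0 have at most 2 elements
  have hBbound : H0.card ≤ 2 * B.card := by
    rw [hB]
    apply Finset.card_le_mul_card_image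
    intro x hx
    obtain ⟨h, hhH0, hhx⟩ := Finset.mem_image.1 hx
    have hhFix : Fix h := (Finset.mem_filter.1 hhH0).2
    have hsub : {k ∈ H0 | dd k = x} ⊆ {h, σ⁻¹ * h * σ} := by
      intro k hk
      obtain ⟨hkH0, hkx⟩ := Finset.mem_filter.1 hk
      have hkFix : Fix k := (Finset.mem_filter.1 hkH0).2
      rw [← hhx] at hkx
      simp only [hdd] at hkx
      have hconj := (dH_eq_iff k h).1 hkx
      obtain ⟨c, hc⟩ := isConj_iff.1 hconj
      -- h = c * k * c⁻¹, so k = c⁻¹ * h * c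
      have hkeq : k = c⁻¹ * h * c := by
        rw [← hc]; group
      rcases hFS c with hcFix | hcSwap
      · -- k = h
        have : c⁻¹ * h * c = h := by
          have h1 : c⁻¹ * h = h * c⁻¹ := hcommFix c⁻¹ h (hfix_inv c hcFix) hhFix
          rw [h1, mul_assoc, inv_mul_cancel, mul_one]
        rw [this] at hkeq
        simp [hkeq]
      · -- k = σ⁻¹ * h * σ
        have he : Fix (c⁻¹ * σ) := hswapswap c⁻¹ σ (hswap_inv c hcSwap) hσswap
        have hmid : Fix (σ⁻¹ * h * σ) := by
          have h1 : Swap (σ⁻¹ * h) := hswapfix σ⁻¹ h (hswap_inv σ hσswap) hhFix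
          exact hswapswap _ _ h1 hσswap
        have hback : Fix (σ⁻¹ * c) := hswapswap σ⁻¹ c (hswap_inv σ hσswap) hcSwap
        -- k = c⁻¹ h c = (c⁻¹ σ)(σ⁻¹ h σ)(σ⁻¹ c)
        have hdecomp : c⁻¹ * h * c = (c⁻¹ * σ) * (σ⁻¹ * h * σ) * (σ⁻¹ * c) := by group
        have hcomm2 : (c⁻¹ * σ) * (σ⁻¹ * h * σ) = (σ⁻¹ * h * σ) * (c⁻¹ * σ) :=
          hcommFix _ _ he hmid
        have : c⁻¹ * h * c = σ⁻¹ * h * σ := by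
          rw [hdecomp, hcomm2, mul_assoc]
          have : (c⁻¹ * σ) * (σ⁻¹ * c) = 1 := by group
          rw [this, mul_one]
        rw [this] at hkeq
        simp [hkeq]
    calc {k ∈ H0 | dd k = x}.card ≤ ({h, σ⁻¹ * h * σ} : Finset ↥H).card :=
        Finset.card_le_card hsub
      _ ≤ 2 := Finset.card_insert_le _ _ |>.trans (by simp)
  -- index bound : |H| ≤ 2 |H0|
  have hindex : Fintype.card ↥H ≤ 2 * H0.card := by
    have hsplit : H0.card + (Finset.univ.filter (fun h : ↥H => ¬ Fix h)).card
        = Fintype.card ↥H := by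
      rw [hH0, ← Finset.card_univ]
      exact Finset.card_filter_add_card_filter_not _
    have hswapcard : (Finset.univ.filter (fun h : ↥H => ¬ Fix h)).card ≤ H0.card := by
      apply Finset.card_le_card_of_injOn (fun k => σ⁻¹ * k)
      · intro k hk
        have hkSwap : Swap k := by
          rcases hFS k with h1 | h1
          · exact absurd h1 (Finset.mem_filter.1 hk).2
          · exact h1
        rw [hH0]
        apply Finset.mem_filter.2
        exact ⟨Finset.mem_univ _, hswapswap σ⁻¹ k (hswap_inv σ hσswap) hkSwap⟩
      · intro x _ y _ hxy
        exact mul_left_cancel hxy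
    omega
  -- disjointness facts
  have hv₁A : cV v₁ ∉ A := by
    rw [hA]
    intro hmem
    obtain ⟨s, hsS, hseq⟩ := Finset.mem_image.1 hmem
    simp only [hcV] at hseq
    obtain ⟨h, hh⟩ := (cV_eq_iff s v₁).1 hseq
    have hsval : s = ((h⁻¹ : ↥H) : V ≃ₗ[ZMod p] V) v₁ := by
      rw [hcoe_inv, ← hh]
      exact ((h : V ≃ₗ[ZMod p] V).symm_apply_apply s).symm
    have hsmem : s ∈ V1 ∨ s ∈ V2 := by
      rcases hFS h⁻¹ with h1 | h1
      · left
        have := happmem h⁻¹ V1 v₁ hv₁mem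
        rw [h1.1] at this
        rw [hsval]; exact this
      · right
        have := happmem h⁻¹ V1 v₁ hv₁mem
        rw [h1.1] at this
        rw [hsval]; exact this
    rcases hsmem with h1 | h1
    · exact (hmemS s hsS).1 h1
    · exact (hmemS s hsS).2 h1
  have hv₁B : cV v₁ ∉ B := by
    rw [hB]
    intro hmem
    obtain ⟨k, -, hkeq⟩ := Finset.mem_image.1 hmem
    by_cases hone : k = 1
    · rw [hone] at hkeq
      simp only [hdd, hcV] at hkeq
      rw [dH_one_eq_cV_zero] at hkeq
      exact hv₁ ((cV_zero_iff v₁).1 hkeq.symm)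
    · exact cV_ne_dH v₁ k hone hkeq.symm
  have hσB : dd σ ∉ B := by
    rw [hB]
    intro hmem
    obtain ⟨k, hkH0, hkeq⟩ := Finset.mem_image.1 hmem
    have hkFix : Fix k := (Finset.mem_filter.1 hkH0).2
    simp only [hdd] at hkeq
    have hconj := (dH_eq_iff k σ).1 hkeq
    obtain ⟨c, hc⟩ := isConj_iff.1 hconj
    have hkeq2 : k = c⁻¹ * σ * c := by rw [← hc]; group
    have hkSwap : Swap k := by
      rw [hkeq2]
      rcases hFS c with h1 | h1
      · exact hswapfix _ _ (hfixswap _ _ (hfix_inv c h1) hσswap) h1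
      · exact hfixswap _ _ (hswapswap _ _ (hswap_inv c h1) hσswap) h1
    exact hexcl k hkFix hkSwap
  have hσA : ∀ x ∈ A, dd σ ≠ x := by
    intro x hx
    obtain ⟨s, -, hseq⟩ := Finset.mem_image.1 (hA ▸ hx)
    intro hEq
    simp only [hcV] at hseq
    simp only [hdd] at hEq
    rw [← hseq] at hEq
    exact cV_ne_dH s σ hσne1 hEq.symm
  have hσv₁ : dd σ ≠ cV v₁ := by
    simp only [hdd, hcV]
    intro hEq
    exact cV_ne_dH v₁ σ hσne1 hEq.symm
  have hABdisj : Disjoint A B := by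
    rw [Finset.disjoint_left]
    intro x hxA hxB
    obtain ⟨s, hsS, hseq⟩ := Finset.mem_image.1 (hA ▸ hxA)
    obtain ⟨k, -, hkeq⟩ := Finset.mem_image.1 (hB ▸ hxB)
    rw [← hkeq] at hseq
    simp only [hcV, hdd] at hseq
    by_cases hone : k = 1
    · rw [hone] at hseq
      rw [dH_one_eq_cV_zero] at hseq
      have : s = 0 := (cV_zero_iff s).1 hseq
      exact (hmemS s hsS).1 (this ▸ V1.zero_mem)
    · exact cV_ne_dH s k hone hseq
  -- total count
  set T : Finset (ConjClasses (SDP p V H)) := insert (cV v₁) (insert (dd σ) (A ∪ B)) with hT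
  have hTcard : T.card = 1 + (1 + (A.card + B.card)) := by
    rw [hT]
    rw [Finset.card_insert_of_notMem (by
      rw [Finset.mem_insert, Finset.mem_union]
      rintro (h | h | h)
      · exact hσv₁ h.symm
      · exact hv₁A h
      · exact hv₁B h)]
    rw [Finset.card_insert_of_notMem (by
      rw [Finset.mem_union]
      rintro (h | h)
      · exact hσA _ h rfl
      · exact hσB h)]
    rw [Finset.card_union_of_disjoint hABdisj]
    omega
  have hTle : T.card ≤ p := by
    calc T.card ≤ Fintype.card (ConjClasses (SDP p V H)) := Finset.card_le_univ T
      _ = Nat.card (ConjClasses (SDP p V H)) := (Nat.card_eq_fintype_card).symm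
      _ ≤ p := hk
  -- numeric contradiction
  set a := A.card
  set b := B.card
  set m := H0.card
  set n := Fintype.card ↥H
  have h2 : a + b + 2 ≤ p := by omega
  have h3 : (2 : ℤ) ≤ p := by exact_mod_cast hp.two_le
  have hsz : (S.card : ℤ) = (p:ℤ)^2 - 2*p + 1 := by
    have e1 : (S.card : ℤ) + ((F1 ∪ F2).card : ℤ) = (p:ℤ)^2 := by
      exact_mod_cast congrArg (Nat.cast : ℕ → ℤ) hcardS
    have e2 : ((F1 ∪ F2).card : ℤ) + 1 = 2*p := by
      exact_mod_cast congrArg (Nat.cast : ℕ → ℤ) hcardU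
    linarith
  have hsa : (S.card : ℤ) ≤ (n:ℤ) * a := by exact_mod_cast hAbound
  have hnm : (n:ℤ) ≤ 2 * m := by exact_mod_cast hindex
  have hmb : (m:ℤ) ≤ 2 * b := by exact_mod_cast hBbound
  have hab2 : (a:ℤ) + b + 2 ≤ p := by exact_mod_cast h2
  have ha0 : (0:ℤ) ≤ a := Int.natCast_nonneg a
  have hb0 : (0:ℤ) ≤ b := Int.natCast_nonneg b
  nlinarith [sq_nonneg ((a:ℤ) - b), sq_nonneg ((a:ℤ) + b), mul_nonneg ha0 hb0]

end Part2

theorem few_classes_implies_irreducible_primitive (p : ℕ) (hp : p.Prime)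
    (V : Type) [AddCommGroup V] [Module (ZMod p) V]
    (hdim : Module.finrank (ZMod p) V = 2)
    (H : Subgroup (V ≃ₗ[ZMod p] V)) (hH : Nat.Coprime (Nat.card ↥H) p)
    (hk : Nat.card (ConjClasses (affSDP (ZMod p) V H)) ≤ p) :
    (∀ W : Submodule (ZMod p) V, (∀ h ∈ H, ∀ v ∈ W, h v ∈ W) → W = ⊥ ∨ W = ⊤) ∧
    ¬ ∃ V₁ V₂ : Submodule (ZMod p) V, V₁ ≠ V₂ ∧
        Module.finrank (ZMod p) ↥V₁ = 1 ∧ Module.finrank (ZMod p) ↥V₂ = 1 ∧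
        IsCompl V₁ V₂ ∧
        ∀ h ∈ H,
          (V₁.map (h : V →ₗ[ZMod p] V) = V₁ ∧ V₂.map (h : V →ₗ[ZMod p] V) = V₂) ∨
          (V₁.map (h : V →ₗ[ZMod p] V) = V₂ ∧ V₂.map (h : V →ₗ[ZMod p] V) = V₁) := by
  haveI : Fact p.Prime := ⟨hp⟩
  haveI : FiniteDimensional (ZMod p) V := .of_finrank_eq_succ hdim
  haveI : Finite V := Module.finite_of_finite (ZMod p)
  haveI : Fintype V := Fintype.ofFinite V
  have hk' : Nat.card (ConjClasses (SDP p V H)) ≤ p := hk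
  have hpart1 : ∀ W : Submodule (ZMod p) V, (∀ h ∈ H, ∀ v ∈ W, h v ∈ W) → W = ⊥ ∨ W = ⊤ := by
    intro W hWinv
    by_contra hcon
    push_neg at hcon
    exact part1_aux hdim hH hk' W hWinv hcon.1 hcon.2
  refine ⟨hpart1, ?_⟩
  rintro ⟨V1, V2, hne, hr1, hr2, hcompl, hperm⟩
  have hdich : ∀ h : ↥H,
      (V1.map ((h : V ≃ₗ[ZMod p] V) : V →ₗ[ZMod p] V) = V1 ∧
       V2.map ((h : V ≃ₗ[ZMod p] V) : V →ₗ[ZMod p] V) = V2) ∨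
      (V1.map ((h : V ≃ₗ[ZMod p] V) : V →ₗ[ZMod p] V) = V2 ∧
       V2.map ((h : V ≃ₗ[ZMod p] V) : V →ₗ[ZMod p] V) = V1) :=
    fun h => hperm h.val h.prop
  by_cases hsw : ∃ σ : ↥H,
      V1.map ((σ : V ≃ₗ[ZMod p] V) : V →ₗ[ZMod p] V) = V2 ∧
      V2.map ((σ : V ≃ₗ[ZMod p] V) : V →ₗ[ZMod p] V) = V1
  · obtain ⟨σ, hσ⟩ := hsw
    exact part2_aux hdim hk' V1 V2 hne hr1 hr2 hcompl hdich σ hσ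
  · push_neg at hsw
    have hfixall : ∀ h : ↥H,
        V1.map ((h : V ≃ₗ[ZMod p] V) : V →ₗ[ZMod p] V) = V1 := by
      intro h
      rcases hdich h with h1 | h1
      · exact h1.1
      · exact absurd h1.2 (hsw h h1.1)
    have hinv : ∀ h ∈ H, ∀ v ∈ V1, h v ∈ V1 := by
      intro h hh v hv
      have heq := hfixall ⟨h, hh⟩
      have hm : h v ∈ V1.map ((h : V ≃ₗ[ZMod p] V) : V →ₗ[ZMod p] V) :=
        Submodule.mem_map_of_mem hv
      rwa [heq] at hm
    rcases hpart1 V1 hinv with h1 | h1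
    · rw [h1, finrank_bot] at hr1
      exact absurd hr1 (by omega)
    · rw [h1, finrank_top, hdim] at hr1
      exact absurd hr1 (by omega)
end
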